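/- Fix an ordinal ξ, a finite set S, and a function f : 𝒯_{ω^ξ} → S. Then there exists an order preserving map i : 𝒯_{ω^ξ} → 𝒯_{ω^ξ} such that f ∘ i is constant. -/

import Mathlib

/-!
Say that `b` has rank at least `η` in a set `X` of nodes if for every `ζ < η` some node of `X`
above `b` has rank at least `ζ`. The minimal tree `𝒯_η` has rank `η`, and conversely a set of
rank at least `η` contains an order preserving copy of `𝒯_η`. Ranks are subadditive for unions
with respect to the Hessenberg sum `♯`, and `ω ^ ξ` is closed under `♯`; so in a finite colouring
of `𝒯_{ω^ξ}` some colour class still has rank `ω ^ ξ`, and it contains the required copy.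
-/

open Ordinal

/-- `s` is a proper initial segment of `t`. -/
def ProperPrefix {S : Type*} (s t : List S) : Prop := s <+: t ∧ s ≠ t

/-- The maximal elements of a set of finite sequences with respect to the
proper-initial-segment order. -/
def maxElems {S : Type*} (T : Set (List S)) : Set (List S) :=
  {t ∈ T | ¬ ∃ u ∈ T, ProperPrefix t u}

/-- The derived tree: remove the maximal elements. -/
def derivTree {S : Type*} (T : Set (List S)) : Set (List S) :=
  {t ∈ T | ∃ u ∈ T, ProperPrefix t u}

/-- Transfinite iterates of the derivation: `d^0 T = T`, `d^(ξ+1) T = (d^ξ T)'`,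
and intersections at limit stages. -/
noncomputable def derivIter {S : Type*} (T : Set (List S)) (ξ : Ordinal) : Set (List S) :=
  Ordinal.limitRecOn ξ T (fun _ ih => derivTree ih)
    (fun o _ ih => ⋂ (ζ : Set.Iio o), ih ζ.1 ζ.2)

/-- A tree on `S`: a set of finite sequences closed under initial segments. -/
def IsTree {S : Type*} (T : Set (List S)) : Prop :=
  ∀ ⦃s t : List S⦄, s <+: t → t ∈ T → s ∈ T

/-- A `B`-tree on `S`: a set of nonempty finite sequences which becomes a tree
after adjoining the empty sequence. -/
def IsBTree {S : Type*} (T : Set (List S)) : Prop :=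
  [] ∉ T ∧ ∀ ⦃s t : List S⦄, s ≠ [] → s <+: t → t ∈ T → s ∈ T

/-- `T` has order exactly `ξ`: `ξ` is the least ordinal whose derived tree is empty. -/
def hasOrder {S : Type*} (T : Set (List S)) (ξ : Ordinal) : Prop :=
  derivIter T ξ = ∅ ∧ ∀ ζ < ξ, derivIter T ζ ≠ ∅

/-- The minimal trees: `𝒯_0 = ∅`, `𝒯_(ξ+1) = {(ξ+1)} ∪ {(ξ+1)⌢t : t ∈ 𝒯_ξ}`,
and `𝒯_λ = ⋃_(ζ<λ) 𝒯_(ζ+1)` at limits. -/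
noncomputable def minTree (ξ : Ordinal) : Set (List Ordinal) :=
  Ordinal.limitRecOn ξ ∅
    (fun ζ ih => {l : List Ordinal | l = [Order.succ ζ] ∨ ∃ t ∈ ih, l = Order.succ ζ :: t})
    (fun o ho ih => ⋃ (ζ : Set.Iio o), ih (Order.succ ζ.1) (ho.succ_lt ζ.2))

universe u

namespace Ordinal

/-- Hessenberg's natural sum. -/
noncomputable def nadd (a b : Ordinal.{u}) : Ordinal.{u} :=
  max (⨆ a' : Set.Iio a, Order.succ (nadd a' b)) (⨆ b' : Set.Iio b, Order.succ (nadd a b'))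
termination_by (a, b)
decreasing_by
  · exact Prod.Lex.left _ _ a'.2
  · exact Prod.Lex.right _ b'.2

infixl:65 " ♯ " => nadd

theorem nadd_lt_nadd_right {a' a : Ordinal.{u}} (h : a' < a) (b : Ordinal.{u}) :
    a' ♯ b < a ♯ b := by
  rw [nadd.eq_1 a b]
  exact (Order.lt_succ _).trans_le <|
    (le_ciSup bddAbove_of_small (⟨a', h⟩ : Set.Iio a)).trans (le_max_left _ _)

theorem nadd_lt_nadd_left {b' b : Ordinal.{u}} (h : b' < b) (a : Ordinal.{u}) :
    a ♯ b' < a ♯ b := by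
  rw [nadd.eq_1 a b]
  exact (Order.lt_succ _).trans_le <|
    (le_ciSup bddAbove_of_small (⟨b', h⟩ : Set.Iio b)).trans (le_max_right _ _)

theorem nadd_le_of_forall_lt {a b c : Ordinal.{u}} (ha : ∀ a' < a, a' ♯ b < c)
    (hb : ∀ b' < b, a ♯ b' < c) : a ♯ b ≤ c := by
  rw [nadd.eq_1]
  exact max_le (ciSup_le' fun a' => Order.succ_le_of_lt (ha a'.1 a'.2))
    (ciSup_le' fun b' => Order.succ_le_of_lt (hb b'.1 b'.2))

theorem exists_eq_mul_nat_add {d a : Ordinal.{u}} (h : a < d * ω) :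
    ∃ k : ℕ, ∃ x < d, a = d * k + x := by
  have hd : d ≠ 0 := by rintro rfl; simp at h
  obtain ⟨k, hk⟩ := lt_omega0.1 ((lt_mul_iff_div_lt hd).1 h)
  exact ⟨k, a % d, mod_lt a hd, by rw [← hk, div_add_mod]⟩

theorem mul_nat_add_lt {d z : Ordinal.{u}} {m n : ℕ} (hz : z < d) (hmn : m < n) :
    d * m + z < d * n :=
  calc d * m + z < d * m + d := add_lt_add_right hz _
    _ = d * ↑(m + 1) := by rw [Nat.cast_succ, mul_add_one]
    _ ≤ d * n := mul_le_mul_right (Nat.cast_le.2 hmn) _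

theorem mul_nat_add_lt_mul_omega0 {d z : Ordinal.{u}} (k : ℕ) (hz : z < d) :
    d * k + z < d * ω :=
  (mul_nat_add_lt hz k.lt_succ_self).trans <|
    mul_lt_mul_of_pos_left (natCast_lt_omega0 _) (pos_of_gt hz)

theorem lt_or_eq_and_lt_of_mul_nat_add_lt {d x x' : Ordinal.{u}} {k k' : ℕ} (hx : x < d)
    (h : d * k' + x' < d * k + x) : k' < k ∨ k' = k ∧ x' < x := by
  rcases lt_trichotomy k' k with hk | rfl | hk
  · exact Or.inl hk
  · exact Or.inr ⟨rfl, lt_of_add_lt_add_left h⟩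
  · exact absurd h ((mul_nat_add_lt hx hk).trans_le le_self_add).not_gt

theorem nadd_mul_nat_add_le {d : Ordinal.{u}} (hd : IsPrincipal (· ♯ ·) d) (k l : ℕ)
    {x y : Ordinal.{u}} (hx : x < d) (hy : y < d) :
    (d * k + x) ♯ (d * l + y) ≤ d * ↑(k + l) + (x ♯ y) := by
  suffices H : ∀ a b : Ordinal.{u}, ∀ (k l : ℕ) (x y : Ordinal.{u}), x < d → y < d →
      a = d * k + x → b = d * l + y → a ♯ b ≤ d * ↑(k + l) + (x ♯ y) from
    H _ _ k l x y hx hy rfl rfl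
  intro a
  induction a using WellFoundedLT.induction with | _ a iha => ?_
  intro b
  induction b using WellFoundedLT.induction with | _ b ihb => ?_
  rintro k l x y hx hy rfl rfl
  apply nadd_le_of_forall_lt
  · intro a' ha'
    obtain ⟨k', x', hx', rfl⟩ :=
      exists_eq_mul_nat_add (ha'.trans (mul_nat_add_lt_mul_omega0 k hx))
    refine (iha _ ha' _ k' l x' y hx' hy rfl rfl).trans_lt ?_
    rcases lt_or_eq_and_lt_of_mul_nat_add_lt hx ha' with hk | ⟨rfl, hx'x⟩
    · exact (mul_nat_add_lt (hd hx' hy : x' ♯ y < d) (by omega : k' + l < k + l)).trans_le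
        le_self_add
    · exact add_lt_add_right (nadd_lt_nadd_right hx'x y) _
  · intro b' hb'
    obtain ⟨l', y', hy', rfl⟩ :=
      exists_eq_mul_nat_add (hb'.trans (mul_nat_add_lt_mul_omega0 l hy))
    refine (ihb _ hb' k l' x y' hx hy' rfl rfl).trans_lt ?_
    rcases lt_or_eq_and_lt_of_mul_nat_add_lt hy hb' with hl | ⟨rfl, hy'y⟩
    · exact (mul_nat_add_lt (hd hx hy' : x ♯ y' < d) (by omega : k + l' < k + l)).trans_le
        le_self_add
    · exact add_lt_add_right (nadd_lt_nadd_left hy'y x) _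

theorem isPrincipal_nadd_omega0_opow (ξ : Ordinal.{u}) : IsPrincipal (· ♯ ·) (ω ^ ξ) := by
  induction ξ using WellFoundedLT.induction with | _ ξ ih => ?_
  rcases zero_or_succ_or_isSuccLimit ξ with rfl | ⟨e, rfl⟩ | hξ
  · intro a b ha hb
    rw [opow_zero, Order.lt_one_iff] at ha hb
    subst ha hb
    exact (nadd_le_of_forall_lt (by simp) (by simp)).trans_lt (opow_pos 0 omega0_pos)
  · intro a b ha hb
    have he := ih e (Order.lt_succ e)
    rw [opow_succ] at ha hb ⊢
    obtain ⟨k, x, hx, rfl⟩ := exists_eq_mul_nat_add ha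
    obtain ⟨l, y, hy, rfl⟩ := exists_eq_mul_nat_add hb
    exact (nadd_mul_nat_add_le he k l hx hy).trans_lt
      (mul_nat_add_lt_mul_omega0 _ (he hx hy : x ♯ y < _))
  · intro a b ha hb
    obtain ⟨ζ, hζ, hab⟩ := (lt_opow_of_isSuccLimit omega0_ne_zero hξ).1 (max_lt ha hb)
    exact (ih ζ hζ ((le_max_left a b).trans_lt hab) ((le_max_right a b).trans_lt hab)).trans
      ((opow_lt_opow_iff_right one_lt_omega0).2 hζ)

end Ordinal

namespace ProperPrefix

variable {S : Type*}

theorem length_lt {s t : List S} (h : ProperPrefix s t) : s.length < t.length :=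
  lt_of_le_of_ne h.1.length_le fun hl => h.2 (h.1.eq_of_length hl)

instance : IsTrans (List S) ProperPrefix :=
  ⟨fun _ _ _ h₁ h₂ =>
    ⟨h₁.1.trans h₂.1, fun he => (h₁.length_lt.trans h₂.length_lt).ne (by rw [he])⟩⟩

theorem nil_cons (a : S) (t : List S) : ProperPrefix [] (a :: t) :=
  ⟨List.nil_prefix, (List.cons_ne_nil a t).symm⟩

theorem not_nil_right (s : List S) : ¬ProperPrefix s [] :=
  fun h => h.length_lt.not_ge (Nat.zero_le _)

theorem cons_cons_iff {a b : S} {s t : List S} :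
    ProperPrefix (a :: s) (b :: t) ↔ a = b ∧ ProperPrefix s t := by
  simp only [ProperPrefix, List.cons_prefix_cons, ne_eq, List.cons.injEq]
  tauto

end ProperPrefix

theorem minTree_zero : minTree.{u} 0 = ∅ := by
  rw [minTree, limitRecOn_zero]

theorem minTree_succ (ζ : Ordinal.{u}) :
    minTree (Order.succ ζ) =
      {l | l = [Order.succ ζ] ∨ ∃ t ∈ minTree ζ, l = Order.succ ζ :: t} := by
  rw [minTree, Order.succ_eq_add_one, limitRecOn_add_one]
  rfl

theorem minTree_of_isSuccLimit {o : Ordinal.{u}} (ho : Order.IsSuccLimit o) :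
    minTree o = ⋃ ζ : Set.Iio o, minTree (Order.succ ζ.1) := by
  rw [minTree, limitRecOn_limit _ _ _ _ ho]
  rfl

theorem exists_eq_cons_of_mem_minTree {η : Ordinal.{u}} {t : List Ordinal.{u}}
    (ht : t ∈ minTree η) :
    ∃ ζ < η, ∃ t', t = Order.succ ζ :: t' ∧ (t' = [] ∨ t' ∈ minTree ζ) := by
  have of_succ : ∀ ζ, t ∈ minTree (Order.succ ζ) →
      ∃ t', t = Order.succ ζ :: t' ∧ (t' = [] ∨ t' ∈ minTree ζ) := by
    intro ζ ht
    rw [minTree_succ] at ht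
    rcases ht with rfl | ⟨t', ht', rfl⟩
    exacts [⟨[], rfl, Or.inl rfl⟩, ⟨t', rfl, Or.inr ht'⟩]
  rcases zero_or_succ_or_isSuccLimit η with rfl | ⟨ζ, rfl⟩ | hη
  · simp [minTree_zero] at ht
  · exact ⟨ζ, Order.lt_succ ζ, of_succ ζ ht⟩
  · rw [minTree_of_isSuccLimit hη, Set.mem_iUnion] at ht
    obtain ⟨⟨ζ, hζ⟩, ht⟩ := ht
    exact ⟨ζ, hζ, of_succ ζ ht⟩

theorem ne_nil_of_mem_minTree {η : Ordinal.{u}} {t : List Ordinal.{u}} (ht : t ∈ minTree η) :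
    t ≠ [] := by
  obtain ⟨ζ, -, t', rfl, -⟩ := exists_eq_cons_of_mem_minTree ht
  exact List.cons_ne_nil _ _

section Rank

variable {α β : Type*} {r : α → α → Prop}

def HasRankGE (r : α → α → Prop) (X : Set α) (b : α) (η : Ordinal.{u}) : Prop :=
  ∀ ζ < η, ∃ u ∈ X, r b u ∧ HasRankGE r X u ζ
termination_by η

variable {X A B : Set α} {b : α} {η ζ : Ordinal.{u}}

theorem hasRankGE_iff :
    HasRankGE r X b η ↔ ∀ ζ < η, ∃ u ∈ X, r b u ∧ HasRankGE r X u ζ := by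
  rw [HasRankGE]

theorem HasRankGE.mono (h : HasRankGE r X b η) (hle : ζ ≤ η) : HasRankGE r X b ζ :=
  hasRankGE_iff.2 fun ξ hξ => hasRankGE_iff.1 h ξ (hξ.trans_le hle)

theorem hasRankGE_succ_iff :
    HasRankGE r X b (Order.succ ζ) ↔ ∃ u ∈ X, r b u ∧ HasRankGE r X u ζ := by
  refine ⟨fun h => hasRankGE_iff.1 h ζ (Order.lt_succ ζ), fun ⟨u, hu, hbu, h⟩ => ?_⟩
  exact hasRankGE_iff.2 fun ξ hξ => ⟨u, hu, hbu, h.mono (Order.lt_succ_iff.1 hξ)⟩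

theorem hasRankGE_iff_forall_succ :
    HasRankGE r X b η ↔ ∀ ζ < η, HasRankGE r X b (Order.succ ζ) := by
  simp only [hasRankGE_succ_iff, ← hasRankGE_iff]

theorem HasRankGE.map {s : β → β → Prop} {Y : Set β} {g : α → β}
    (hg : ∀ a a', r a a' → s (g a) (g a')) (hXY : Set.MapsTo g X Y) (h : HasRankGE r X b η) :
    HasRankGE s Y (g b) η := by
  induction η using WellFoundedLT.induction generalizing b with | _ η ih => ?_
  refine hasRankGE_iff.2 fun ζ hζ => ?_
  obtain ⟨u, hu, hbu, hζu⟩ := hasRankGE_iff.1 h ζ hζ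
  exact ⟨g u, hXY hu, hg _ _ hbu, ih ζ hζ hζu⟩

theorem HasRankGE.of_rel [IsTrans α r] {u : α} (hbu : r b u) (h : HasRankGE r X u η) :
    HasRankGE r X b η :=
  hasRankGE_iff.2 fun ζ hζ =>
    let ⟨w, hw, huw, hζw⟩ := hasRankGE_iff.1 h ζ hζ
    ⟨w, hw, _root_.trans hbu huw, hζw⟩

/-- In terms of ranks: `rank (A ∪ B) ≤ rank A ♯ rank B`. -/
theorem HasRankGE.of_union_succ_nadd [IsTrans α r] {μ ν : Ordinal.{u}}
    (h : HasRankGE r (A ∪ B) b (Order.succ (μ ♯ ν))) :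
    HasRankGE r A b (Order.succ μ) ∨ HasRankGE r B b (Order.succ ν) := by
  induction μ using WellFoundedLT.induction generalizing ν b with | _ μ ihμ => ?_
  induction ν using WellFoundedLT.induction generalizing b with | _ ν ihν => ?_
  by_contra! hAB
  obtain ⟨hA, hB⟩ := hAB
  obtain ⟨w, hw, hbw, hwU⟩ := hasRankGE_succ_iff.1 h
  rcases hw with hwA | hwB
  · have hwμ : ¬HasRankGE r A w μ := fun hμ => hA (hasRankGE_succ_iff.2 ⟨w, hwA, hbw, hμ⟩)
    simp only [hasRankGE_iff_forall_succ (η := μ), not_forall] at hwμ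
    obtain ⟨μ', hμ', hwμ'⟩ := hwμ
    rcases ihμ μ' hμ' (hwU.mono (Order.succ_le_of_lt (nadd_lt_nadd_right hμ' ν))) with h' | h'
    exacts [hwμ' h', hB (h'.of_rel hbw)]
  · have hwν : ¬HasRankGE r B w ν := fun hν => hB (hasRankGE_succ_iff.2 ⟨w, hwB, hbw, hν⟩)
    simp only [hasRankGE_iff_forall_succ (η := ν), not_forall] at hwν
    obtain ⟨ν', hν', hwν'⟩ := hwν
    rcases ihν ν' hν' (hwU.mono (Order.succ_le_of_lt (nadd_lt_nadd_left hν' μ))) with h' | h'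
    exacts [hA (h'.of_rel hbw), hwν' h']

theorem HasRankGE.of_union [IsTrans α r] (hη : IsPrincipal (· ♯ ·) η)
    (h : HasRankGE r (A ∪ B) b η) : HasRankGE r A b η ∨ HasRankGE r B b η := by
  by_contra! hAB
  obtain ⟨hA, hB⟩ := hAB
  simp only [hasRankGE_iff_forall_succ (η := η), not_forall] at hA hB
  obtain ⟨μ, hμ, hA⟩ := hA
  obtain ⟨ν, hν, hB⟩ := hB
  rcases (h.mono (Order.succ_le_of_lt (hη hμ hν))).of_union_succ_nadd with h' | h'
  exacts [hA h', hB h']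

theorem HasRankGE.exists_fiber [IsTrans α r] {ι : Type*} [Finite ι] (g : α → ι)
    (hη : IsPrincipal (· ♯ ·) η) (hη₀ : η ≠ 0) (h : HasRankGE r X b η) :
    ∃ c, HasRankGE r (X ∩ g ⁻¹' {c}) b η := by
  classical
  have : Fintype ι := Fintype.ofFinite ι
  suffices H : ∀ s : Finset ι, HasRankGE r (X ∩ g ⁻¹' s) b η →
      ∃ c, HasRankGE r (X ∩ g ⁻¹' {c}) b η from
    H Finset.univ (by simpa using h)
  intro s
  induction s using Finset.induction_on with
  | empty =>
    intro h
    obtain ⟨u, hu, -⟩ := hasRankGE_iff.1 h 0 (pos_iff_ne_zero.2 hη₀)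
    simp at hu
  | insert c s _ ih =>
    intro h
    rw [Finset.coe_insert, Set.insert_eq, Set.preimage_union, Set.inter_union_distrib_left] at h
    exact (h.of_union hη).elim (fun h => ⟨c, h⟩) ih

theorem hasRankGE_minTree (η : Ordinal.{u}) : HasRankGE ProperPrefix (minTree η) [] η := by
  induction η using limitRecOn with
  | zero => exact hasRankGE_iff.2 fun ζ hζ => (not_lt_zero hζ).elim
  | add_one ζ ih =>
    rw [← Order.succ_eq_add_one, hasRankGE_succ_iff]
    refine ⟨[Order.succ ζ], by rw [minTree_succ]; exact Or.inl rfl, .nil_cons _ _, ?_⟩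
    refine ih.map (g := (Order.succ ζ :: ·))
      (fun s t h => ProperPrefix.cons_cons_iff.2 ⟨rfl, h⟩) ?_
    intro t ht
    rw [minTree_succ]
    exact Or.inr ⟨t, ht, rfl⟩
  | limit o ho ih =>
    refine hasRankGE_iff_forall_succ.2 fun ζ hζ => ?_
    refine (ih _ (ho.succ_lt hζ)).map (g := id) (fun _ _ => id) fun t ht => ?_
    rw [minTree_of_isSuccLimit ho]
    exact Set.mem_iUnion.2 ⟨⟨ζ, hζ⟩, ht⟩

structure IsMinTreeEmbedding (r : α → α → Prop) (A : Set α) (b : α) (η : Ordinal.{u})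
    (i : List Ordinal.{u} → α) : Prop where
  mapsTo : Set.MapsTo i (minTree η) A
  rel_base : ∀ t ∈ minTree η, r b (i t)
  map_rel : ∀ ⦃s⦄, s ∈ minTree η → ∀ ⦃t⦄, t ∈ minTree η → ProperPrefix s t → r (i s) (i t)

theorem HasRankGE.exists_isMinTreeEmbedding [IsTrans α r] (h : HasRankGE r A b η) :
    ∃ i, IsMinTreeEmbedding r A b η i := by
  induction η using WellFoundedLT.induction generalizing b with | _ η ih => ?_
  have : Nonempty α := ⟨b⟩
  have hsub : ∀ ζ < η, ∃ u ∈ A, r b u ∧ ∃ I, IsMinTreeEmbedding r A u ζ I := fun ζ hζ =>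
    let ⟨u, hu, hbu, hζu⟩ := hasRankGE_iff.1 h ζ hζ
    ⟨u, hu, hbu, ih ζ hζ hζu⟩
  choose! u hu hbu I hI using hsub
  let i : List Ordinal.{u} → α := fun t =>
    if t.tail = [] then u (Ordinal.pred t.headI) else I (Ordinal.pred t.headI) t.tail
  have hi : ∀ ζ t', i (Order.succ ζ :: t') = if t' = [] then u ζ else I ζ t' := by
    intro ζ t'
    simp only [i, List.tail_cons, List.headI_cons, Order.succ_eq_add_one, pred_add_one]
  refine ⟨i, ⟨fun t ht => ?_, fun t ht => ?_, fun s hs t ht hst => ?_⟩⟩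
  · obtain ⟨ζ, hζ, t', rfl, rfl | ht'⟩ := exists_eq_cons_of_mem_minTree ht
    · rw [hi, if_pos rfl]
      exact hu ζ hζ
    · rw [hi, if_neg (ne_nil_of_mem_minTree ht')]
      exact (hI ζ hζ).mapsTo ht'
  · obtain ⟨ζ, hζ, t', rfl, rfl | ht'⟩ := exists_eq_cons_of_mem_minTree ht
    · rw [hi, if_pos rfl]
      exact hbu ζ hζ
    · rw [hi, if_neg (ne_nil_of_mem_minTree ht')]
      exact _root_.trans (hbu ζ hζ) ((hI ζ hζ).rel_base t' ht')
  · obtain ⟨ζ, hζ, s', rfl, hs'⟩ := exists_eq_cons_of_mem_minTree hs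
    obtain ⟨ζ', -, t', rfl, ht'⟩ := exists_eq_cons_of_mem_minTree ht
    obtain ⟨hζζ', hst'⟩ := ProperPrefix.cons_cons_iff.1 hst
    obtain rfl := Order.succ_injective hζζ'
    rcases hs' with rfl | hs' <;> rcases ht' with rfl | ht'
    · exact absurd hst' (ProperPrefix.not_nil_right _)
    · rw [hi, hi, if_pos rfl, if_neg (ne_nil_of_mem_minTree ht')]
      exact (hI ζ hζ).rel_base t' ht'
    · exact absurd hst' (ProperPrefix.not_nil_right _)
    · rw [hi, hi, if_neg (ne_nil_of_mem_minTree hs'), if_neg (ne_nil_of_mem_minTree ht')]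
      exact (hI ζ hζ).map_rel hs' ht' hst'

end Rank

/-- If `S` is a finite set and `f : 𝒯_{ω^ξ} → S`, then there is an order preserving
map `i : 𝒯_{ω^ξ} → 𝒯_{ω^ξ}` with `f ∘ i` constant. -/
theorem minTree_finite_coloring (ξ : Ordinal) (S : Type*) [Finite S]
    (f : List Ordinal → S) :
    ∃ i : List Ordinal → List Ordinal,
      (∀ t ∈ minTree (Ordinal.omega0 ^ ξ), i t ∈ minTree (Ordinal.omega0 ^ ξ)) ∧
      (∀ s ∈ minTree (Ordinal.omega0 ^ ξ), ∀ t ∈ minTree (Ordinal.omega0 ^ ξ),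
        ProperPrefix s t → ProperPrefix (i s) (i t)) ∧
      ∃ c : S, ∀ t ∈ minTree (Ordinal.omega0 ^ ξ), f (i t) = c := by
  obtain ⟨c, hc⟩ := (hasRankGE_minTree (ω ^ ξ)).exists_fiber f (isPrincipal_nadd_omega0_opow ξ)
    (opow_ne_zero ξ omega0_ne_zero)
  obtain ⟨i, hi⟩ := hc.exists_isMinTreeEmbedding
  exact ⟨i, fun t ht => (hi.mapsTo ht).1, fun s hs t ht hst => hi.map_rel hs ht hst,
    c, fun t ht => (hi.mapsTo ht).2⟩
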